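/- (Existence of a joint distribution with given univariate marginals and edge covariances on a tree; Section 2.2) Suppose the edge set E forms a tree on Fin n. Let μ_i be univariate pmfs on C i ⊆ ℝ with means m_i = Σ_{x ∈ C i} x * μ_i(x), and for each (i,j) ∈ E let Σ_{ij} ∈ ℝ. Suppose that for each (i,j) ∈ E there exists a bivariate pmf θ_{ij} on C i × C j with Σ_{y ∈ C j} θ_{ij}(x,y) = μ_i(x) for all x, Σ_{x ∈ C i} θ_{ij}(x,y) = μ_j(y) for all y, and Σ_{(x,y) ∈ C i × C j} x * y * θ_{ij}(x,y) − m_i * m_j = Σ_{ij}. Then there exists a joint distribution θ on Π i, C i with proj_i θ = μ_i for every i ∈ Fin n and with covariance Σ_c (c i) * (c j) * θ(c) − m_i * m_j = Σ_{ij} for every (i,j) ∈ E. -/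

import Mathlib

/-!
The joint law is built one vertex at a time, in an order in which every vertex of the tree has at
most one neighbour among the earlier ones. Start from the product of the marginals `μ i`, in which
every coordinate is independent of the others. When `b` is added with earlier neighbour `a`,
coordinate `b` is still independent, so the `(a, b)`-marginal is `μ a ⊗ μ b`; multiplying the joint
law by the density `κ / (μ a ⊗ μ b)` of the prescribed coupling `κ` of that edge, evaluated at
`(c a, c b)`, turns this marginal into `κ` and leaves the law of the coordinates other than `b`
unchanged. In the end every edge carries its coupling, and an edge covariance only depends on the
bivariate marginal of the edge.
-/

open Finset

noncomputable section

abbrev Pt {n : ℕ} (C : Fin n → Finset ℝ) := (i : Fin n) → {x : ℝ // x ∈ C i}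

def IsJoint {n : ℕ} {C : Fin n → Finset ℝ} (θ : Pt C → ℝ) : Prop :=
  (∀ c, 0 ≤ θ c) ∧ ∑ c : Pt C, θ c = 1

def projUni {n : ℕ} {C : Fin n → Finset ℝ} (θ : Pt C → ℝ) (i : Fin n)
    (x : {x : ℝ // x ∈ C i}) : ℝ :=
  ∑ c : Pt C, if c i = x then θ c else 0

def projBi {n : ℕ} {C : Fin n → Finset ℝ} (θ : Pt C → ℝ) (i j : Fin n)
    (p : {x : ℝ // x ∈ C i} × {y : ℝ // y ∈ C j}) : ℝ :=
  ∑ c : Pt C, if c i = p.1 ∧ c j = p.2 then θ c else 0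

def IsPmf {S : Type*} [Fintype S] (p : S → ℝ) : Prop :=
  (∀ s, 0 ≤ p s) ∧ ∑ s, p s = 1

def KL {S : Type*} [Fintype S] (p q : S → ℝ) : ℝ :=
  ∑ s, if 0 < p s then p s * Real.log (p s / q s) else 0

def Vanishes {S : Type*} (p q : S → ℝ) : Prop := ∀ s, q s = 0 → p s = 0

def treeGraph {n : ℕ} (E : Finset (Fin n × Fin n)) : SimpleGraph (Fin n) :=
  SimpleGraph.fromRel (fun i j => (i, j) ∈ E)

def IsTreeEdges {n : ℕ} (E : Finset (Fin n × Fin n)) : Prop :=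
  (∀ e ∈ E, e.1 < e.2) ∧ (treeGraph E).IsTree

def psi {n : ℕ} {C : Fin n → Finset ℝ} {K : ℕ} (a : Fin K → Fin n → ℝ) (b : Fin K → ℝ)
    (c : Pt C) : ℝ :=
  ⨆ k : Fin K, (∑ i, a k i * (c i : ℝ) + b k)

def InTheta {n : ℕ} {C : Fin n → Finset ℝ} (E : Finset (Fin n × Fin n))
    (μU : (i : Fin n) → {x : ℝ // x ∈ C i} → ℝ)
    (μB : (i j : Fin n) → ({x : ℝ // x ∈ C i} × {y : ℝ // y ∈ C j}) → ℝ)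
    (ρ : ℝ) (θ : Pt C → ℝ) : Prop :=
  IsJoint θ ∧ (∀ i, projUni θ i = μU i) ∧
  ∀ i j, (i, j) ∈ E →
    Vanishes (projBi θ i j) (μB i j) ∧ KL (projBi θ i j) (μB i j) ≤ ρ

namespace SimpleGraph

variable {V : Type*} {G : SimpleGraph V}

theorem IsAcyclic.eq_of_adj_of_preconnected_induce (hG : G.IsAcyclic) {s : Set V}
    (hs : (G.induce s).Preconnected) {a a' b : V} (ha : a ∈ s) (ha' : a' ∈ s) (hb : b ∉ s)
    (hba : G.Adj b a) (hba' : G.Adj b a') : a = a' := by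
  by_contra hne
  -- `s(b, a)` is a bridge, yet `b` reaches `a` through `a'` and then inside `s`
  apply isAcyclic_iff_forall_isBridge.mp hG (G.mem_edgeSet.mpr hba)
  let f : G.induce s →g G.deleteEdges {s(b, a)} :=
    { toFun := Subtype.val
      map_rel' := fun {u v} huv => deleteEdges_adj.mpr ⟨huv, fun h => by
        rcases Sym2.eq_iff.mp h with ⟨rfl, -⟩ | ⟨-, rfl⟩
        exacts [hb u.2, hb v.2]⟩ }
  have hba'' : (G.deleteEdges {s(b, a)}).Adj b a' :=
    deleteEdges_adj.mpr ⟨hba', by simp [Ne.symm hne, hba.ne]⟩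
  exact hba''.reachable.trans ((hs ⟨a', ha'⟩ ⟨a, ha⟩).map f)

theorem Preconnected.exists_preconnected_induce_insert [DecidableEq V] (hG : G.Preconnected)
    {s : Finset V} (hs : (G.induce (s : Set V)).Preconnected) {y : V} (hy : y ∉ s) :
    ∃ b ∉ s, (G.induce (insert b s : Finset V)).Preconnected := by
  rcases s.eq_empty_or_nonempty with rfl | ⟨x, hx⟩
  · exact ⟨y, hy, by simpa using Preconnected.of_subsingleton⟩
  · obtain ⟨d, -, hd₁, hd₂⟩ := (hG x y).some.exists_boundary_dart (s : Set V) hx hy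
    refine ⟨d.snd, hd₂, ?_⟩
    rw [coe_insert, Set.insert_eq]
    exact (connected_induce_union (s := {d.snd}) Preconnected.of_subsingleton hs rfl hd₁
      d.adj.symm).preconnected

theorem IsTree.induction_univ [Fintype V] [DecidableEq V] (hG : G.IsTree)
    {P : Finset V → Prop} (h_empty : P ∅)
    (h_insert : ∀ s b, b ∉ s → (∀ a ∈ s, ∀ a' ∈ s, G.Adj b a → G.Adj b a' → a = a') →
      P s → P (insert b s)) :
    P univ := by
  -- the vertices added so far keep inducing a connected subgraph, which acyclicity needs
  suffices ∀ k (s : Finset V), #sᶜ = k → (G.induce (s : Set V)).Preconnected → P s → P univ from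
    this _ ∅ rfl (by rw [coe_empty]; exact Preconnected.of_subsingleton) h_empty
  intro k
  induction k with
  | zero =>
    intro s hk _ hs
    rw [card_eq_zero, compl_eq_empty_iff] at hk
    rwa [← hk]
  | succ k ih =>
    intro s hk hconn hs
    obtain ⟨y, hy⟩ : sᶜ.Nonempty := card_pos.mp (by omega)
    obtain ⟨b, hb, hconn'⟩ :=
      hG.connected.preconnected.exists_preconnected_induce_insert hconn (mem_compl.mp hy)
    refine ih _ ?_ hconn' (h_insert s b hb (fun a ha a' ha' =>
      hG.isAcyclic.eq_of_adj_of_preconnected_induce hconn ha ha' hb) hs)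
    rw [compl_insert, card_erase_of_mem (mem_compl.mpr hb), hk, Nat.add_sub_cancel]

end SimpleGraph

theorem Fintype.sum_mul_sum_update {ι R : Type*} [Fintype ι] [DecidableEq ι] {α : ι → Type*}
    [∀ i, Fintype (α i)] [Semiring R] (k : ι) {w : α k → R} (hw : ∑ y, w y = 1)
    (G : ((i : ι) → α i) → R) :
    ∑ c, w (c k) * ∑ y, G (Function.update c k y) = ∑ c, G c := by
  set e := Equiv.piSplitAt k α
  have split : ∀ H : ((i : ι) → α i) → R, ∑ c, H c = ∑ r, ∑ y, H (e.symm (y, r)) := fun H => by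
    rw [← e.symm.sum_comp, Fintype.sum_prod_type, Finset.sum_comm]
  have hk : ∀ y r, e.symm (y, r) k = y := fun y r => by simp [e]
  have hupd : ∀ y y' r, Function.update (e.symm (y, r)) k y' = e.symm (y', r) := fun y y' r => by
    ext j
    rcases eq_or_ne j k with rfl | hj <;> simp [e, *]
  rw [split (fun c => w (c k) * _), split G]
  refine Finset.sum_congr rfl fun r _ => ?_
  simp only [hk, hupd, ← sum_mul, hw, one_mul]

theorem Finset.eq_and_mem_or_of_mem_insert {α : Type*} [DecidableEq α] {s : Finset α}
    {b i j : α} (hij : i ≠ j) (hi : i ∈ insert b s) (hj : j ∈ insert b s)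
    (hs : ¬(i ∈ s ∧ j ∈ s)) : (i = b ∧ j ∈ s) ∨ (j = b ∧ i ∈ s) := by
  rw [mem_insert] at hi hj
  grind

section

variable {n : ℕ} {C : Fin n → Finset ℝ}

-- Coordinate `k` is independent of the others and has law `ν`, written without dividing by `ν`.
def IndepCoord {ι : Type*} [DecidableEq ι] {α : ι → Type*} (θ : ((i : ι) → α i) → ℝ) (k : ι)
    (ν : α k → ℝ) : Prop :=
  ∀ c y, θ (Function.update c k y) * ν (c k) = θ c * ν y

theorem IndepCoord.sum_mul_eq {ι : Type*} [Fintype ι] [DecidableEq ι] {α : ι → Type*}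
    [∀ i, Fintype (α i)] {θ : ((i : ι) → α i) → ℝ} {k : ι} {ν : α k → ℝ} (h : IndepCoord θ k ν)
    (hν : ∑ y, ν y = 1) (G : ((i : ι) → α i) → ℝ) :
    ∑ c, G c * θ c = ∑ c, θ c * ∑ y, ν y * G (Function.update c k y) := by
  rw [← Fintype.sum_mul_sum_update k hν fun c => G c * θ c]
  refine sum_congr rfl fun c _ => ?_
  rw [mul_sum, mul_sum]
  refine sum_congr rfl fun y _ => ?_
  linear_combination G (Function.update c k y) * h c y

theorem IndepCoord.projUni_eq {θ : Pt C → ℝ} {k : Fin n} {ν : {x // x ∈ C k} → ℝ}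
    (h : IndepCoord θ k ν) (hν : ∑ y, ν y = 1) (hθ : ∑ c, θ c = 1) : projUni θ k = ν := by
  funext x
  calc projUni θ k x = ∑ c, (if c k = x then 1 else 0) * θ c := by simp [projUni]
    _ = ∑ c, θ c * ν x := by rw [h.sum_mul_eq hν]; simp
    _ = ν x := by rw [← sum_mul, hθ, one_mul]

theorem IndepCoord.projBi_eq {θ : Pt C → ℝ} {a b : Fin n} {ν : {x // x ∈ C b} → ℝ}
    (h : IndepCoord θ b ν) (hν : ∑ y, ν y = 1) (hab : a ≠ b) (p) :
    projBi θ a b p = projUni θ a p.1 * ν p.2 := by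
  rw [projUni, sum_mul]
  simpa [projBi, ite_mul, Function.update_of_ne hab, ite_and] using
    h.sum_mul_eq hν fun c => if c a = p.1 ∧ c b = p.2 then 1 else 0

theorem sum_mul_eq_sum_mul_projBi (θ : Pt C → ℝ) (i j : Fin n)
    (F : {x // x ∈ C i} × {y // y ∈ C j} → ℝ) :
    ∑ c, F (c i, c j) * θ c = ∑ p, F p * projBi θ i j p := by
  simp only [projBi, mul_sum]
  rw [sum_comm]
  refine sum_congr rfl fun c _ => ?_
  simp [Fintype.sum_prod_type, mul_ite, ite_and]

theorem sum_projBi_fst (θ : Pt C → ℝ) (i j : Fin n) (y : {y // y ∈ C j}) :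
    ∑ x, projBi θ i j (x, y) = projUni θ j y := by
  simp only [projBi, projUni]
  rw [sum_comm]
  refine sum_congr rfl fun c _ => ?_
  simp [ite_and]

theorem projBi_swap (θ : Pt C → ℝ) (i j : Fin n) (p : {x // x ∈ C i} × {y // y ∈ C j}) :
    projBi θ j i p.swap = projBi θ i j p := by
  simp only [projBi, Prod.fst_swap, Prod.snd_swap, and_comm]

theorem eq_zero_of_projUni_eq_zero {θ : Pt C → ℝ} (hθ : ∀ c, 0 ≤ θ c) {i : Fin n} {c : Pt C}
    (h : projUni θ i (c i) = 0) : θ c = 0 := by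
  have := (sum_eq_zero_iff_of_nonneg fun c' _ => ?_).mp h c (mem_univ c)
  · simpa using this
  · split_ifs
    exacts [hθ c', le_rfl]

def IsCoupling {α β : Type*} [Fintype α] [Fintype β] (μ : α → ℝ) (ν : β → ℝ) (κ : α × β → ℝ) :
    Prop :=
  (∀ p, 0 ≤ κ p) ∧ (∀ x, ∑ y, κ (x, y) = μ x) ∧ ∀ y, ∑ x, κ (x, y) = ν y

theorem IsCoupling.swap {α β : Type*} [Fintype α] [Fintype β] {μ : α → ℝ} {ν : β → ℝ}
    {κ : α × β → ℝ} (h : IsCoupling μ ν κ) : IsCoupling ν μ (fun p => κ p.swap) :=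
  ⟨fun p => h.1 p.swap, h.2.2, h.2.1⟩

theorem IsCoupling.div_mul_cancel {α β : Type*} [Fintype α] [Fintype β] {μ : α → ℝ}
    {ν : β → ℝ} {κ : α × β → ℝ} (h : IsCoupling μ ν κ) (p : α × β) :
    κ p / (μ p.1 * ν p.2) * (μ p.1 * ν p.2) = κ p := by
  refine div_mul_cancel_of_imp fun h0 => ?_
  rcases mul_eq_zero.mp h0 with h0 | h0
  · rw [← h.2.1] at h0
    exact (sum_eq_zero_iff_of_nonneg fun y _ => h.1 _).mp h0 p.2 (mem_univ _)
  · rw [← h.2.2] at h0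
    exact (sum_eq_zero_iff_of_nonneg fun x _ => h.1 _).mp h0 p.1 (mem_univ _)

def reweight (θ : Pt C → ℝ) (a b : Fin n) (ρ : {x // x ∈ C a} × {y // y ∈ C b} → ℝ)
    (c : Pt C) : ℝ :=
  θ c * ρ (c a, c b)

theorem projBi_reweight (θ : Pt C → ℝ) (a b : Fin n)
    (ρ : {x // x ∈ C a} × {y // y ∈ C b} → ℝ) (p : {x // x ∈ C a} × {y // y ∈ C b}) :
    projBi (reweight θ a b ρ) a b p = ρ p * projBi θ a b p := by
  simp only [projBi, reweight, mul_sum]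
  refine sum_congr rfl fun c _ => ?_
  split_ifs with h
  · rw [h.1, h.2, mul_comm]
  · rw [mul_zero]

theorem IndepCoord.reweight {θ : Pt C → ℝ} {a b k : Fin n} {ν : {x // x ∈ C k} → ℝ}
    (h : IndepCoord θ k ν) (hka : k ≠ a) (hkb : k ≠ b)
    (ρ : {x // x ∈ C a} × {y // y ∈ C b} → ℝ) : IndepCoord (reweight θ a b ρ) k ν := by
  intro c y
  simp only [_root_.reweight, Function.update_of_ne hka.symm, Function.update_of_ne hkb.symm]
  linear_combination ρ (c a, c b) * h c y

theorem sum_mul_reweight_of_indepCoord {θ : Pt C → ℝ} {a b : Fin n} {ν : {x // x ∈ C b} → ℝ}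
    (h : IndepCoord θ b ν) (hν : ∑ y, ν y = 1) (hab : a ≠ b)
    {ρ : {x // x ∈ C a} × {y // y ∈ C b} → ℝ} (hρ : ∀ c, θ c * ∑ y, ν y * ρ (c a, y) = θ c)
    {F : Pt C → ℝ} (hF : ∀ c y, F (Function.update c b y) = F c) :
    ∑ c, F c * reweight θ a b ρ c = ∑ c, F c * θ c := by
  calc ∑ c, F c * reweight θ a b ρ c = ∑ c, F c * ρ (c a, c b) * θ c := by
        simp only [reweight, mul_comm, mul_left_comm]
    _ = ∑ c, F c * (θ c * ∑ y, ν y * ρ (c a, y)) := by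
        rw [h.sum_mul_eq hν]
        simp only [hF, Function.update_of_ne hab, Function.update_self, mul_sum]
        exact sum_congr rfl fun c _ => sum_congr rfl fun y _ => by ring
    _ = ∑ c, F c * θ c := by simp only [hρ]

theorem exists_glue {μ : (i : Fin n) → {x // x ∈ C i} → ℝ} (hμ : ∀ i, IsPmf (μ i))
    {θ : Pt C → ℝ} (hθ : IsJoint θ) (hproj : ∀ i, projUni θ i = μ i) {a b : Fin n}
    (hab : a ≠ b) (hind : IndepCoord θ b (μ b))
    {κ : {x // x ∈ C a} × {y // y ∈ C b} → ℝ} (hκ : IsCoupling (μ a) (μ b) κ) :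
    ∃ θ', IsJoint θ' ∧ (∀ i, projUni θ' i = μ i) ∧ projBi θ' a b = κ ∧
      (∀ i j, i ≠ b → j ≠ b → projBi θ' i j = projBi θ i j) ∧
      ∀ k, k ≠ a → k ≠ b → IndepCoord θ k (μ k) → IndepCoord θ' k (μ k) := by
  set ρ : {x // x ∈ C a} × {y // y ∈ C b} → ℝ := fun p => κ p / (μ a p.1 * μ b p.2)
  have hρ : ∀ c, θ c * ∑ y, μ b y * ρ (c a, y) = θ c := by
    intro c
    rcases eq_or_ne (μ a (c a)) 0 with h0 | h0
    · rw [eq_zero_of_projUni_eq_zero hθ.1 (by rw [hproj, h0]), zero_mul]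
    · suffices ∑ y, μ b y * ρ (c a, y) = 1 by rw [this, mul_one]
      refine mul_left_cancel₀ h0 ?_
      rw [mul_sum, mul_one]
      conv_rhs => rw [← hκ.2.1 (c a)]
      refine sum_congr rfl fun y _ => ?_
      linear_combination hκ.div_mul_cancel (c a, y)
  have hsum : ∀ F : Pt C → ℝ, (∀ c y, F (Function.update c b y) = F c) →
      ∑ c, F c * reweight θ a b ρ c = ∑ c, F c * θ c :=
    fun F hF => sum_mul_reweight_of_indepCoord hind (hμ b).2 hab hρ hF
  have hbi : projBi (reweight θ a b ρ) a b = κ := by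
    funext p
    rw [projBi_reweight, hind.projBi_eq (hμ b).2 hab, hproj, hκ.div_mul_cancel]
  refine ⟨reweight θ a b ρ, ⟨fun c => ?_, ?_⟩, fun i => ?_, hbi, fun i j hi hj => ?_,
    fun k hka hkb h => h.reweight hka hkb ρ⟩
  · exact mul_nonneg (hθ.1 c) (div_nonneg (hκ.1 _) (mul_nonneg ((hμ a).1 _) ((hμ b).1 _)))
  · simpa [hθ.2] using hsum (fun _ => 1) fun _ _ => rfl
  · rcases eq_or_ne i b with rfl | hib
    · funext y
      rw [← sum_projBi_fst _ a, hbi, hκ.2.2]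
    · funext x
      rw [← hproj i]
      simpa [projUni] using hsum (fun c => if c i = x then 1 else 0)
        fun c y => by rw [Function.update_of_ne hib]
  · funext p
    simpa [projBi] using hsum (fun c => if c i = p.1 ∧ c j = p.2 then 1 else 0)
      fun c y => by rw [Function.update_of_ne hi, Function.update_of_ne hj]

theorem indepCoord_prod {ι : Type*} [Fintype ι] [DecidableEq ι] {α : ι → Type*}
    (μ : (i : ι) → α i → ℝ) (k : ι) : IndepCoord (fun c => ∏ i, μ i (c i)) k (μ k) := by
  intro c y
  dsimp only
  rw [← mul_prod_erase univ _ (mem_univ k), ← mul_prod_erase univ (fun i => μ i (c i)) (mem_univ k),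
    Function.update_self,
    prod_congr rfl fun i hi => by rw [Function.update_of_ne (ne_of_mem_erase hi)]]
  ring

-- The invariant of the construction once the vertices of `S` have been added.
structure RealizesOn (E : Finset (Fin n × Fin n)) (μ : (i : Fin n) → {x // x ∈ C i} → ℝ)
    (κ : (i j : Fin n) → {x // x ∈ C i} × {y // y ∈ C j} → ℝ) (S : Finset (Fin n))
    (θ : Pt C → ℝ) : Prop where
  isJoint : IsJoint θ
  projUni_eq : ∀ i, projUni θ i = μ i
  projBi_eq : ∀ i j, (i, j) ∈ E → i ∈ S → j ∈ S → projBi θ i j = κ i j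
  indepCoord : ∀ k ∉ S, IndepCoord θ k (μ k)

variable {E : Finset (Fin n × Fin n)} {μ : (i : Fin n) → {x // x ∈ C i} → ℝ}
  {κ : (i j : Fin n) → {x // x ∈ C i} × {y // y ∈ C j} → ℝ}

theorem exists_realizesOn_empty (hμ : ∀ i, IsPmf (μ i)) : ∃ θ, RealizesOn E μ κ ∅ θ := by
  have htot : ∑ c : Pt C, ∏ i, μ i (c i) = 1 := by
    rw [← Fintype.prod_sum]
    exact prod_eq_one fun i _ => (hμ i).2
  refine ⟨fun c => ∏ i, μ i (c i), ⟨fun c => prod_nonneg fun i _ => (hμ i).1 _, htot⟩,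
    fun i => (indepCoord_prod μ i).projUni_eq (hμ i).2 htot, by simp,
    fun k _ => indepCoord_prod μ k⟩

theorem adj_treeGraph_of_mem (hE : ∀ e ∈ E, e.1 < e.2) {i j : Fin n} (hij : (i, j) ∈ E) :
    (treeGraph E).Adj i j :=
  (SimpleGraph.fromRel_adj _ _ _).mpr ⟨(hE _ hij).ne, Or.inl hij⟩

theorem RealizesOn.insert_of_forall_not_adj (hE : ∀ e ∈ E, e.1 < e.2) {S : Finset (Fin n)}
    {θ : Pt C → ℝ} (h : RealizesOn E μ κ S θ) {b : Fin n}
    (hnb : ∀ a ∈ S, ¬(treeGraph E).Adj b a) : RealizesOn E μ κ (insert b S) θ := by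
  refine ⟨h.isJoint, h.projUni_eq, fun i j hij hi hj => ?_,
    fun k hk => h.indepCoord k fun hkS => hk (mem_insert_of_mem hkS)⟩
  by_cases hS : i ∈ S ∧ j ∈ S
  · exact h.projBi_eq i j hij hS.1 hS.2
  · rcases eq_and_mem_or_of_mem_insert (hE _ hij).ne hi hj hS with ⟨rfl, hjS⟩ | ⟨rfl, hiS⟩
    · exact absurd (adj_treeGraph_of_mem hE hij) (hnb j hjS)
    · exact absurd (adj_treeGraph_of_mem hE hij).symm (hnb i hiS)

theorem RealizesOn.exists_insert_of_adj (hE : ∀ e ∈ E, e.1 < e.2) (hμ : ∀ i, IsPmf (μ i))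
    (hκ : ∀ i j, (i, j) ∈ E → IsCoupling (μ i) (μ j) (κ i j)) {S : Finset (Fin n)}
    {θ : Pt C → ℝ} (h : RealizesOn E μ κ S θ) {a b : Fin n} (ha : a ∈ S) (hb : b ∉ S)
    (hba : (treeGraph E).Adj b a) (huniq : ∀ a' ∈ S, (treeGraph E).Adj b a' → a' = a) :
    ∃ θ', RealizesOn E μ κ (insert b S) θ' := by
  set κab := if (a, b) ∈ E then κ a b else fun p => κ b a p.swap
  have hκab : IsCoupling (μ a) (μ b) κab := by
    by_cases hab : (a, b) ∈ E
    · simpa [κab, hab] using hκ a b hab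
    · have hba' : (b, a) ∈ E := ((SimpleGraph.fromRel_adj _ _ _).mp hba).2.resolve_right hab
      simpa [κab, hab] using (hκ b a hba').swap
  obtain ⟨θ', hjoint, hproj, hab_eq, hold, hind⟩ :=
    exists_glue hμ h.isJoint h.projUni_eq hba.ne.symm (h.indepCoord b hb) hκab
  refine ⟨θ', ⟨hjoint, hproj, fun i j hij hi hj => ?_, fun k hk => ?_⟩⟩
  · by_cases hS : i ∈ S ∧ j ∈ S
    · rw [hold i j (ne_of_mem_of_not_mem hS.1 hb) (ne_of_mem_of_not_mem hS.2 hb),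
        h.projBi_eq i j hij hS.1 hS.2]
    · rcases eq_and_mem_or_of_mem_insert (hE _ hij).ne hi hj hS with ⟨rfl, hjS⟩ | ⟨rfl, hiS⟩
      · obtain rfl := huniq j hjS (adj_treeGraph_of_mem hE hij)
        have : (j, i) ∉ E := fun h' => lt_asymm (hE _ hij) (hE _ h')
        funext p
        rw [← projBi_swap, hab_eq]
        simp [κab, this]
      · obtain rfl := huniq i hiS (adj_treeGraph_of_mem hE hij).symm
        rw [hab_eq]
        simp [κab, hij]
  · rw [mem_insert, not_or] at hk
    exact hind k (ne_of_mem_of_not_mem ha hk.2).symm hk.1 (h.indepCoord k hk.2)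

theorem RealizesOn.exists_insert (hE : ∀ e ∈ E, e.1 < e.2) (hμ : ∀ i, IsPmf (μ i))
    (hκ : ∀ i j, (i, j) ∈ E → IsCoupling (μ i) (μ j) (κ i j)) {S : Finset (Fin n)}
    {θ : Pt C → ℝ} (h : RealizesOn E μ κ S θ) {b : Fin n} (hb : b ∉ S)
    (huniq : ∀ a ∈ S, ∀ a' ∈ S, (treeGraph E).Adj b a → (treeGraph E).Adj b a' → a = a') :
    ∃ θ', RealizesOn E μ κ (insert b S) θ' := by
  by_cases hnb : ∃ a ∈ S, (treeGraph E).Adj b a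
  · obtain ⟨a, ha, hba⟩ := hnb
    exact h.exists_insert_of_adj hE hμ hκ ha hb hba fun a' ha' hba' => huniq a' ha' a ha hba' hba
  · push Not at hnb
    exact ⟨θ, h.insert_of_forall_not_adj hE hnb⟩

theorem exists_isJoint_projBi_eq_of_isTreeEdges (hE : IsTreeEdges E) (hμ : ∀ i, IsPmf (μ i))
    (hκ : ∀ i j, (i, j) ∈ E → IsCoupling (μ i) (μ j) (κ i j)) :
    ∃ θ, IsJoint θ ∧ (∀ i, projUni θ i = μ i) ∧ ∀ i j, (i, j) ∈ E → projBi θ i j = κ i j := by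
  obtain ⟨θ, h⟩ := hE.2.induction_univ (P := fun S => ∃ θ, RealizesOn E μ κ S θ)
    (exists_realizesOn_empty hμ) fun S b hb huniq ⟨θ, h⟩ => h.exists_insert hE.1 hμ hκ hb huniq
  exact ⟨θ, h.isJoint, h.projUni_eq, fun i j hij => h.projBi_eq i j hij (mem_univ i) (mem_univ j)⟩

end

theorem stmt13_general
    (n : ℕ) (C : Fin n → Finset ℝ)
    (E : Finset (Fin n × Fin n)) (hE : IsTreeEdges E)
    (μU : (i : Fin n) → {x : ℝ // x ∈ C i} → ℝ) (hμU : ∀ i, IsPmf (μU i))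
    (m : Fin n → ℝ)
    (Sig : Fin n → Fin n → ℝ)
    (hcov : ∀ i j, (i, j) ∈ E →
      ∃ θij : ({x : ℝ // x ∈ C i} × {y : ℝ // y ∈ C j}) → ℝ,
        IsPmf θij ∧
        (∀ x : {x : ℝ // x ∈ C i},
          ∑ y : {y : ℝ // y ∈ C j}, θij (x, y) = μU i x) ∧
        (∀ y : {y : ℝ // y ∈ C j},
          ∑ x : {x : ℝ // x ∈ C i}, θij (x, y) = μU j y) ∧
        (∑ p : {x : ℝ // x ∈ C i} × {y : ℝ // y ∈ C j},
          (p.1 : ℝ) * (p.2 : ℝ) * θij p) - m i * m j = Sig i j) :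
    ∃ θ : Pt C → ℝ, IsJoint θ ∧ (∀ i, projUni θ i = μU i) ∧
      ∀ i j, (i, j) ∈ E →
        (∑ c : Pt C, (c i : ℝ) * (c j : ℝ) * θ c) - m i * m j = Sig i j := by
  have hκ : ∀ i j, ∃ κ : {x : ℝ // x ∈ C i} × {y : ℝ // y ∈ C j} → ℝ, (i, j) ∈ E →
      IsCoupling (μU i) (μU j) κ ∧ (∑ p, (p.1 : ℝ) * (p.2 : ℝ) * κ p) - m i * m j = Sig i j := by
    intro i j
    by_cases hij : (i, j) ∈ E
    · obtain ⟨κ, hpmf, hrow, hcol, hSig⟩ := hcov i j hij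
      exact ⟨κ, fun _ => ⟨⟨hpmf.1, hrow, hcol⟩, hSig⟩⟩
    · exact ⟨0, fun h => absurd h hij⟩
  choose κ hκ using hκ
  obtain ⟨θ, hθ, hproj, hbi⟩ :=
    exists_isJoint_projBi_eq_of_isTreeEdges hE hμU fun i j hij => (hκ i j hij).1
  refine ⟨θ, hθ, hproj, fun i j hij => ?_⟩
  rw [sum_mul_eq_sum_mul_projBi θ i j fun p => (p.1 : ℝ) * p.2, hbi i j hij]
  exact (hκ i j hij).2

/-- Existence of a joint distribution with given univariate marginals and prescribed
edge covariances on a tree: if each edge covariance `Σ_{ij}` is attainable by some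
bivariate pmf consistent with the univariate marginals, then there is a joint
distribution with those univariate marginals attaining all the edge covariances. -/
theorem stmt13
    (n : ℕ) (hn : 1 ≤ n) (C : Fin n → Finset ℝ) (hC : ∀ i, (C i).Nonempty)
    (E : Finset (Fin n × Fin n)) (hE : IsTreeEdges E)
    (μU : (i : Fin n) → {x : ℝ // x ∈ C i} → ℝ) (hμU : ∀ i, IsPmf (μU i))
    (m : Fin n → ℝ) (hm : ∀ i, m i = ∑ x : {x : ℝ // x ∈ C i}, (x : ℝ) * μU i x)
    (Sig : Fin n → Fin n → ℝ)
    (hcov : ∀ i j, (i, j) ∈ E →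
      ∃ θij : ({x : ℝ // x ∈ C i} × {y : ℝ // y ∈ C j}) → ℝ,
        IsPmf θij ∧
        (∀ x : {x : ℝ // x ∈ C i},
          ∑ y : {y : ℝ // y ∈ C j}, θij (x, y) = μU i x) ∧
        (∀ y : {y : ℝ // y ∈ C j},
          ∑ x : {x : ℝ // x ∈ C i}, θij (x, y) = μU j y) ∧
        (∑ p : {x : ℝ // x ∈ C i} × {y : ℝ // y ∈ C j},
          (p.1 : ℝ) * (p.2 : ℝ) * θij p) - m i * m j = Sig i j) :
    ∃ θ : Pt C → ℝ, IsJoint θ ∧ (∀ i, projUni θ i = μU i) ∧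
      ∀ i j, (i, j) ∈ E →
        (∑ c : Pt C, (c i : ℝ) * (c j : ℝ) * θ c) - m i * m j = Sig i j :=
  stmt13_general n C E hE μU hμU m Sig hcov
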